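/- For every κ ∈ {0, 1, …, 2n}, every a ∈ {0, 1}, and every generator H ∈ {Z_j : 1 ≤ j ≤ n} ∪ {X_j X_{j+1} : 1 ≤ j ≤ n−1}, the operator Q_κ^a commutes with H ⊗ I + I ⊗ H, where I is the 2^n × 2^n identity: [H ⊗ I + I ⊗ H, Q_κ^a] = 0. -/

import Mathlib

open Matrix Complex
open scoped Kronecker

noncomputable section

abbrev QIdx (n : ℕ) := Fin n → Fin 2
abbrev NMat (n : ℕ) := Matrix (QIdx n) (QIdx n) ℂ
abbrev NMat2 (n : ℕ) := Matrix (QIdx n × QIdx n) (QIdx n × QIdx n) ℂ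

/-- The 2×2 Pauli X matrix. -/
def σX : Matrix (Fin 2) (Fin 2) ℂ := !![0, 1; 1, 0]
/-- The 2×2 Pauli Y matrix. -/
def σY : Matrix (Fin 2) (Fin 2) ℂ := !![0, -Complex.I; Complex.I, 0]
/-- The 2×2 Pauli Z matrix. -/
def σZ : Matrix (Fin 2) (Fin 2) ℂ := !![1, 0; 0, -1]

/-- Tensor (Kronecker) product of `n` one-qubit matrices, realized on index type `Fin n → Fin 2`. -/
def tensor {n : ℕ} (M : Fin n → Matrix (Fin 2) (Fin 2) ℂ) : NMat n :=
  Matrix.of fun f g => ∏ i, M i (f i) (g i)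

/-- The Jordan–Wigner Majorana operator `c_μ` (0-based index: `c_{2i} = Z^{⊗i} X I…`,
`c_{2i+1} = Z^{⊗i} Y I…`). -/
def majorana (n : ℕ) (μ : Fin (2 * n)) : NMat n :=
  tensor fun j =>
    if (j : ℕ) < (μ : ℕ) / 2 then σZ
    else if (j : ℕ) = (μ : ℕ) / 2 then (if (μ : ℕ) % 2 = 0 then σX else σY)
    else 1

/-- Ordered product `c^s` of the Majorana operators indexed by a subset `s`. -/
def cProd (n : ℕ) (s : Finset (Fin (2 * n))) : NMat n :=
  ((s.sort (· ≤ ·)).map (majorana n)).prod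

/-- The module `B_κ`: the complex span of products of `κ` distinct Majoranas. -/
def Bspace (n κ : ℕ) : Submodule ℂ (NMat n) :=
  Submodule.span ℂ {M | ∃ s : Finset (Fin (2 * n)), s.card = κ ∧ M = cProd n s}

/-- The Pauli string with `Z` on qubit `j` and identity elsewhere. -/
def pauliZ (n : ℕ) (j : Fin n) : NMat n := tensor fun k => if k = j then σZ else 1

/-- The Pauli string with `X` on qubits `j` and `j+1` and identity elsewhere. -/
def pauliXX (n : ℕ) (j : Fin n) : NMat n :=
  tensor fun k => if (k : ℕ) = (j : ℕ) ∨ (k : ℕ) = (j : ℕ) + 1 then σX else 1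

/-- The parity operator `P = Z^{⊗n}`. -/
def parity (n : ℕ) : NMat n := tensor fun _ => σZ


/-- Normalization constant `(d √C(2n,κ))⁻¹` with `d = 2^n`. -/
def Qnorm (n κ : ℕ) : ℂ := ((2 ^ n : ℂ) * ((Real.sqrt (Nat.choose (2 * n) κ) : ℝ) : ℂ))⁻¹

/-- The quadratic symmetry `Q_κ^0 = (d √C(2n,κ))⁻¹ Σ_{|s|=κ} c^s ⊗ c^s`. -/
def Q0 (n κ : ℕ) : NMat2 n :=
  Qnorm n κ • ∑ s ∈ Finset.powersetCard κ (Finset.univ : Finset (Fin (2 * n))),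
    (cProd n s) ⊗ₖ (cProd n s)

/-- The sum of the (1-based) elements of `s`, i.e. `π(s)`. -/
def piSum (n : ℕ) (s : Finset (Fin (2 * n))) : ℕ := ∑ μ ∈ s, ((μ : ℕ) + 1)

/-- The quadratic symmetry
`Q_κ^1 = (d √C(2n,κ))⁻¹ (−i)^n i^{κ mod 2} Σ_{|s|=κ} (−1)^{π(s)} c^s ⊗ c^{s̄}`. -/
def Q1 (n κ : ℕ) : NMat2 n :=
  (Qnorm n κ * (-Complex.I) ^ n * Complex.I ^ (κ % 2)) •
    ∑ s ∈ Finset.powersetCard κ (Finset.univ : Finset (Fin (2 * n))),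
      ((-1 : ℂ)) ^ (piSum n s) • ((cProd n s) ⊗ₖ (cProd n sᶜ))

/-- The matchgate circuit generators `{Z_j} ∪ {X_j X_{j+1}}`. -/
def matchgateGens (n : ℕ) : Set (NMat n) :=
  {M | ∃ j : Fin n, M = pauliZ n j} ∪
  {M | ∃ j : Fin n, (j : ℕ) + 1 < n ∧ M = pauliXX n j}

/-- The two-copy representation `H ⊗ I + I ⊗ H` of a generator `H`. -/
def bigH (n : ℕ) (H : NMat n) : NMat2 n :=
  H ⊗ₖ (1 : NMat n) + (1 : NMat n) ⊗ₖ H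

/-!
Under the Jordan–Wigner map every generator is `H = -i c_a c_b` for adjacent indices `a ⋖ b`
(`Z_j = -i c_{2j} c_{2j+1}`, `X_j X_{j+1} = -i c_{2j+1} c_{2j+2}`), and `H ⊗ I + I ⊗ H` acts on
`c^s ⊗ c^t` through the bracket `[c_a c_b, ·]` on each factor. Only the Clifford relations
`c_μ² = 1`, `c_μ c_ν = -c_ν c_μ` enter: `c_a c_b` commutes with `c^s` when `s` contains both or
neither of `a, b`, and otherwise `[c_a c_b, c^s] = ∓2 c^{s'}` with `s'` the image of `s` under the
transposition `(a b)`; adjacency of `a` and `b` is what keeps `c^{s'}` in sorted order. The terms of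
`Q_κ^0` and `Q_κ^1` indexed by `s` and `s'` therefore cancel in pairs; for `Q_κ^1` one also uses
`(s')ᶜ = (sᶜ)'` and `π(s') = π(s) ± 1`.
-/

structure IsCliffordFamily {ι A : Type*} [Ring A] (γ : ι → A) : Prop where
  mul_self : ∀ i, γ i * γ i = 1
  anticomm : ∀ ⦃i j⦄, i ≠ j → γ i * γ j = -(γ j * γ i)

namespace IsCliffordFamily

variable {ι A : Type*} [Ring A] {γ : ι → A} (hγ : IsCliffordFamily γ) {a b : ι}
include hγ

lemma pair_mul_self (hab : a ≠ b) : γ a * γ b * (γ a * γ b) = -1 := by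
  rw [mul_assoc, ← mul_assoc (γ b), hγ.anticomm hab.symm, neg_mul, mul_neg, ← mul_assoc,
    ← mul_assoc, hγ.mul_self, one_mul, hγ.mul_self]

variable [DecidableEq ι]

lemma pair_mul (hab : a ≠ b) (x : ι) :
    γ a * γ b * γ x =
      (-1 : ℤ) ^ ((if x = a then 1 else 0) + (if x = b then 1 else 0)) • (γ x * (γ a * γ b)) := by
  by_cases hxa : x = a
  · subst hxa
    simp only [if_pos, if_neg hab, add_zero, pow_one, neg_one_zsmul]
    rw [mul_assoc, hγ.anticomm hab.symm, mul_neg, ← mul_assoc]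
  by_cases hxb : x = b
  · subst hxb
    simp only [if_pos, if_neg hxa, zero_add, pow_one, neg_one_zsmul]
    rw [mul_assoc, hγ.mul_self, ← mul_assoc, hγ.anticomm (Ne.symm hab), neg_mul, mul_assoc,
      hγ.mul_self, mul_one, neg_neg]
  · simp only [if_neg hxa, if_neg hxb, add_zero, pow_zero, one_smul]
    rw [mul_assoc, hγ.anticomm (Ne.symm hxb), mul_neg, ← mul_assoc, hγ.anticomm (Ne.symm hxa),
      neg_mul, neg_neg, mul_assoc]

lemma pair_mul_list_prod (hab : a ≠ b) (l : List ι) :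
    γ a * γ b * (l.map γ).prod =
      (-1 : ℤ) ^ (l.count a + l.count b) • ((l.map γ).prod * (γ a * γ b)) := by
  induction l with
  | nil => simp
  | cons x t ih =>
    rw [List.map_cons, List.prod_cons, ← mul_assoc, hγ.pair_mul hab, smul_mul_assoc, mul_assoc,
      ih, mul_smul_comm, smul_smul, ← pow_add, ← mul_assoc]
    congr 2
    simp only [List.count_cons, beq_iff_eq]
    omega

lemma pair_mul_list_prod_map_swap (hab : a ≠ b) {l : List ι} (hl : l.Nodup) (ha : a ∈ l)
    (hb : b ∉ l) :
    γ a * γ b * (l.map γ).prod = -((l.map (Equiv.swap a b)).map γ).prod := by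
  induction l with
  | nil => simp at ha
  | cons x t ih =>
    obtain ⟨hxt, ht⟩ := List.nodup_cons.mp hl
    obtain ⟨hbx, hbt⟩ := not_or.mp (List.mem_cons.not.mp hb)
    simp only [List.map_cons, List.prod_cons]
    rw [← mul_assoc, hγ.pair_mul hab]
    by_cases hxa : x = a
    · subst hxa
      have hfix : t.map (Equiv.swap x b) = t :=
        (List.map_congr_left fun y hy => Equiv.swap_apply_of_ne_of_ne
          (fun h : y = x => hxt (h ▸ hy)) fun h : y = b => hbt (h ▸ hy)).trans (List.map_id' t)
      simp [hfix, if_neg hab, ← mul_assoc, hγ.mul_self]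
    · have hxb : x ≠ b := fun h => hbx h.symm
      rw [if_neg hxa, if_neg hxb, Equiv.swap_apply_of_ne_of_ne hxa hxb, add_zero, pow_zero,
        one_smul, mul_assoc, ih ht ((List.mem_cons.mp ha).resolve_left (Ne.symm hxa)) hbt, mul_neg]

end IsCliffordFamily

lemma strictMonoOn_swap_of_covBy {ι : Type*} [LinearOrder ι] {a b : ι} (hab : a ⋖ b)
    {s : Set ι} (hb : b ∉ s) : StrictMonoOn (Equiv.swap a b) s := by
  intro x hx y hy hxy
  have hxb : x ≠ b := fun h => hb (h ▸ hx)
  have hyb : y ≠ b := fun h => hb (h ▸ hy)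
  rcases eq_or_ne x a with rfl | hxa
  · rw [Equiv.swap_apply_left, Equiv.swap_apply_of_ne_of_ne hxy.ne' hyb]
    exact (hab.ge_of_gt hxy).lt_of_ne hyb.symm
  rcases eq_or_ne y a with rfl | hya
  · rw [Equiv.swap_apply_left, Equiv.swap_apply_of_ne_of_ne hxa hxb]
    exact hxy.trans hab.lt
  · rwa [Equiv.swap_apply_of_ne_of_ne hxa hxb, Equiv.swap_apply_of_ne_of_ne hya hyb]

def sortedProd {ι A : Type*} [LinearOrder ι] [Monoid A] (γ : ι → A) (s : Finset ι) : A :=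
  ((s.sort (· ≤ ·)).map γ).prod

namespace IsCliffordFamily

variable {ι A : Type*} [LinearOrder ι] [Ring A] {γ : ι → A} (hγ : IsCliffordFamily γ)
  {a b : ι} {s : Finset ι}
include hγ

lemma pair_mul_sortedProd (hab : a ≠ b) (s : Finset ι) :
    γ a * γ b * sortedProd γ s =
      (-1 : ℤ) ^ ((if a ∈ s then 1 else 0) + (if b ∈ s then 1 else 0)) •
        (sortedProd γ s * (γ a * γ b)) := by
  simp only [sortedProd, hγ.pair_mul_list_prod hab, (s.sort_nodup _).count, Finset.mem_sort]

lemma lie_pair_sortedProd_of_iff (hab : a ≠ b) (h : a ∈ s ↔ b ∈ s) :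
    ⁅γ a * γ b, sortedProd γ s⁆ = 0 := by
  rw [Ring.lie_def, hγ.pair_mul_sortedProd hab, if_congr h rfl rfl,
    Even.neg_one_pow ⟨_, rfl⟩, one_smul, sub_self]

lemma pair_mul_sortedProd_of_mem (hab : a ⋖ b) (ha : a ∈ s) (hb : b ∉ s) :
    γ a * γ b * sortedProd γ s = -sortedProd γ (s.map (Equiv.swap a b).toEmbedding) := by
  rw [sortedProd, sortedProd, ← (strictMonoOn_swap_of_covBy hab hb).map_finsetSort]
  exact hγ.pair_mul_list_prod_map_swap hab.ne (s.sort_nodup _) ((s.mem_sort _).mpr ha)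
    (mt (s.mem_sort _).mp hb)

lemma sortedProd_mul_pair_of_mem (hab : a ⋖ b) (ha : a ∈ s) (hb : b ∉ s) :
    sortedProd γ s * (γ a * γ b) = sortedProd γ (s.map (Equiv.swap a b).toEmbedding) := by
  have h := hγ.pair_mul_sortedProd hab.ne s
  rw [if_pos ha, if_neg hb, hγ.pair_mul_sortedProd_of_mem hab ha hb] at h
  simpa using h.symm

lemma lie_pair_sortedProd_of_mem (hab : a ⋖ b) (ha : a ∈ s) (hb : b ∉ s) :
    ⁅γ a * γ b, sortedProd γ s⁆ = -(2 • sortedProd γ (s.map (Equiv.swap a b).toEmbedding)) := by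
  rw [Ring.lie_def, hγ.pair_mul_sortedProd_of_mem hab ha hb,
    hγ.sortedProd_mul_pair_of_mem hab ha hb, two_nsmul, neg_add']

lemma lie_pair_sortedProd_map_swap (hab : a ⋖ b) (ha : a ∈ s) (hb : b ∉ s) :
    ⁅γ a * γ b, sortedProd γ (s.map (Equiv.swap a b).toEmbedding)⁆ = 2 • sortedProd γ s := by
  rw [Ring.lie_def, ← hγ.sortedProd_mul_pair_of_mem hab ha hb, ← mul_assoc,
    hγ.pair_mul_sortedProd_of_mem hab ha hb, ← hγ.sortedProd_mul_pair_of_mem hab ha hb, neg_mul,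
    mul_assoc (sortedProd γ s), hγ.pair_mul_self hab.ne, mul_neg_one, neg_neg, sub_neg_eq_add,
    two_nsmul]

end IsCliffordFamily

lemma Finset.mem_map_swap_left {ι : Type*} [DecidableEq ι] {a b : ι} {s : Finset ι} :
    a ∈ s.map (Equiv.swap a b).toEmbedding ↔ b ∈ s := by
  simp [Finset.mem_map_equiv]

lemma Finset.mem_map_swap_right {ι : Type*} [DecidableEq ι] {a b : ι} {s : Finset ι} :
    b ∈ s.map (Equiv.swap a b).toEmbedding ↔ a ∈ s := by
  simp [Finset.mem_map_equiv]

lemma Finset.map_swap_map_swap {ι : Type*} [DecidableEq ι] (a b : ι) (s : Finset ι) :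
    (s.map (Equiv.swap a b).toEmbedding).map (Equiv.swap a b).toEmbedding = s := by
  ext; simp [Finset.mem_map_equiv]

lemma Finset.compl_map_equiv {ι κ : Type*} [Fintype ι] [Fintype κ] [DecidableEq ι]
    [DecidableEq κ] (e : ι ≃ κ) (s : Finset ι) : (s.map e.toEmbedding)ᶜ = sᶜ.map e.toEmbedding := by
  ext; simp [Finset.mem_map_equiv]

lemma Finset.sum_powersetCard_eq_zero_of_swap {ι M : Type*} [Fintype ι] [DecidableEq ι]
    [AddCommGroup M] (a b : ι) (κ : ℕ) (f : Finset ι → M)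
    (h_iff : ∀ s, (a ∈ s ↔ b ∈ s) → f s = 0)
    (h_swap : ∀ s, a ∈ s → b ∉ s → f s + f (s.map (Equiv.swap a b).toEmbedding) = 0) :
    ∑ s ∈ powersetCard κ univ, f s = 0 := by
  refine sum_involution (fun s _ => s.map (Equiv.swap a b).toEmbedding) (fun s _ => ?_)
    (fun s _ hs h => hs (h_iff s ?_)) (fun s hs => ?_) (fun s _ => map_swap_map_swap a b s)
  · by_cases h : a ∈ s ↔ b ∈ s
    · rw [h_iff s h, h_iff _ (mem_map_swap_left.trans (h.symm.trans mem_map_swap_right.symm)),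
        add_zero]
    by_cases ha : a ∈ s
    · exact h_swap s ha (fun hb => h (iff_of_true ha hb))
    · have hb : b ∈ s := by tauto
      rw [add_comm, ← h_swap _ (mem_map_swap_left.mpr hb) (mem_map_swap_right.not.mpr ha),
        map_swap_map_swap]
  · rw [← mem_map_swap_left (b := b), h]
  · simpa using hs

lemma tensor_mul {n : ℕ} (M N : Fin n → Matrix (Fin 2) (Fin 2) ℂ) :
    tensor M * tensor N = tensor fun i => M i * N i := by
  ext f g
  simp only [tensor, mul_apply, of_apply]
  rw [← Fintype.piFinset_univ, Finset.prod_univ_sum]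
  exact Finset.sum_congr rfl fun x _ => Finset.prod_mul_distrib.symm

lemma tensor_one {n : ℕ} : tensor (fun _ : Fin n => (1 : Matrix (Fin 2) (Fin 2) ℂ)) = 1 := by
  ext f g
  simp only [tensor, of_apply, one_apply]
  split_ifs with h
  · simp [h]
  · obtain ⟨i, hi⟩ := Function.ne_iff.mp h
    exact Finset.prod_eq_zero (Finset.mem_univ i) (if_neg hi)

lemma tensor_eq_smul_of_eq_smul {n : ℕ} {M N : Fin n → Matrix (Fin 2) (Fin 2) ℂ} (j : Fin n)
    (z : ℂ) (hj : M j = z • N j) (h : ∀ i ≠ j, M i = N i) : tensor M = z • tensor N := by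
  ext f g
  simp only [tensor, Matrix.smul_apply, of_apply, smul_eq_mul]
  rw [← Finset.mul_prod_erase _ _ (Finset.mem_univ j),
    ← Finset.mul_prod_erase _ (fun i => N i (f i) (g i)) (Finset.mem_univ j), hj, Matrix.smul_apply,
    smul_eq_mul, mul_assoc,
    Finset.prod_congr rfl fun i hi => by rw [h i (Finset.ne_of_mem_erase hi)]]

lemma σX_mul_self : σX * σX = 1 := by
  ext i j; fin_cases i <;> fin_cases j <;> simp [σX]
lemma σY_mul_self : σY * σY = 1 := by
  ext i j; fin_cases i <;> fin_cases j <;> simp [σY]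
lemma σZ_mul_self : σZ * σZ = 1 := by
  ext i j; fin_cases i <;> fin_cases j <;> simp [σZ]
lemma σX_mul_σY : σX * σY = I • σZ := by
  ext i j; fin_cases i <;> fin_cases j <;> simp [σX, σY, σZ]
lemma σY_mul_σZ : σY * σZ = I • σX := by
  ext i j; fin_cases i <;> fin_cases j <;> simp [σX, σY, σZ]
lemma σX_anticomm_σZ : σX * σZ = -(σZ * σX) := by
  ext i j; fin_cases i <;> fin_cases j <;> simp [σX, σZ]
lemma σY_anticomm_σZ : σY * σZ = -(σZ * σY) := by
  ext i j; fin_cases i <;> fin_cases j <;> simp [σY, σZ]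
lemma σX_anticomm_σY : σX * σY = -(σY * σX) := by
  ext i j; fin_cases i <;> fin_cases j <;> simp [σX, σY]

def majoranaFactor {n : ℕ} (μ : Fin (2 * n)) (j : Fin n) : Matrix (Fin 2) (Fin 2) ℂ :=
  if (j : ℕ) < (μ : ℕ) / 2 then σZ
  else if (j : ℕ) = (μ : ℕ) / 2 then (if (μ : ℕ) % 2 = 0 then σX else σY)
  else 1

lemma majorana_eq_tensor (n : ℕ) (μ : Fin (2 * n)) : majorana n μ = tensor (majoranaFactor μ) :=
  rfl

section majoranaFactor

variable {n : ℕ} (μ : Fin (2 * n)) {j : Fin n}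

lemma majoranaFactor_of_lt (h : (j : ℕ) < (μ : ℕ) / 2) : majoranaFactor μ j = σZ :=
  if_pos h

lemma majoranaFactor_of_eq (h : (j : ℕ) = (μ : ℕ) / 2) :
    majoranaFactor μ j = if (μ : ℕ) % 2 = 0 then σX else σY := by
  rw [majoranaFactor, if_neg h.not_lt, if_pos h]

lemma majoranaFactor_of_gt (h : (μ : ℕ) / 2 < (j : ℕ)) : majoranaFactor μ j = 1 := by
  rw [majoranaFactor, if_neg (by omega), if_neg (by omega)]

lemma majoranaFactor_mul_self (j : Fin n) : majoranaFactor μ j * majoranaFactor μ j = 1 := by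
  unfold majoranaFactor
  split_ifs <;> simp [σX_mul_self, σY_mul_self, σZ_mul_self]

end majoranaFactor

lemma majorana_anticomm_of_lt {n : ℕ} {μ ν : Fin (2 * n)} (h : μ < ν) :
    majorana n μ * majorana n ν = -(majorana n ν * majorana n μ) := by
  have hμν : (μ : ℕ) / 2 ≤ (ν : ℕ) / 2 := Nat.div_le_div_right h.le
  rw [majorana_eq_tensor, majorana_eq_tensor, tensor_mul, tensor_mul, ← neg_one_smul ℂ]
  refine tensor_eq_smul_of_eq_smul ⟨(μ : ℕ) / 2, by omega⟩ (-1) ?_ fun i hi => ?_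
  · rw [majoranaFactor_of_eq μ rfl, neg_one_smul]
    rcases hμν.lt_or_eq with hlt | heq
    · rw [majoranaFactor_of_lt ν hlt]
      split_ifs
      exacts [σX_anticomm_σZ, σY_anticomm_σZ]
    · rw [majoranaFactor_of_eq ν heq, if_pos (by omega), if_neg (by omega)]
      exact σX_anticomm_σY
  · have hi' : (i : ℕ) ≠ (μ : ℕ) / 2 := fun h => hi (Fin.ext h)
    rcases hi'.lt_or_gt with hlt | hgt
    · rw [majoranaFactor_of_lt μ hlt, majoranaFactor_of_lt ν (hlt.trans_le hμν)]
    · rw [majoranaFactor_of_gt μ hgt, one_mul, mul_one]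

lemma isCliffordFamily_majorana (n : ℕ) : IsCliffordFamily (majorana n) where
  mul_self μ := by
    rw [majorana_eq_tensor, tensor_mul]
    simp only [majoranaFactor_mul_self, tensor_one]
  anticomm μ ν h := by
    rcases h.lt_or_gt with hlt | hgt
    · exact majorana_anticomm_of_lt hlt
    · rw [majorana_anticomm_of_lt hgt, neg_neg]

lemma majorana_mul_majorana_eq_smul_pauliZ {n : ℕ} (j : Fin n) {a b : Fin (2 * n)}
    (ha : (a : ℕ) = 2 * j) (hb : (b : ℕ) = 2 * j + 1) :
    majorana n a * majorana n b = I • pauliZ n j := by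
  rw [majorana_eq_tensor, majorana_eq_tensor, tensor_mul, pauliZ]
  refine tensor_eq_smul_of_eq_smul j I ?_ fun i hi => ?_
  · rw [majoranaFactor_of_eq _ (by omega), majoranaFactor_of_eq _ (by omega),
      if_pos (by omega), if_neg (by omega), if_pos rfl, σX_mul_σY]
  · have hi' : (i : ℕ) ≠ j := fun h => hi (Fin.ext h)
    rw [if_neg hi]
    rcases hi'.lt_or_gt with hlt | hgt
    · rw [majoranaFactor_of_lt _ (by omega), majoranaFactor_of_lt _ (by omega),
        σZ_mul_self]
    · rw [majoranaFactor_of_gt _ (by omega), majoranaFactor_of_gt _ (by omega),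
        one_mul]

lemma majorana_mul_majorana_eq_smul_pauliXX {n : ℕ} (j : Fin n) {a b : Fin (2 * n)}
    (ha : (a : ℕ) = 2 * j + 1) (hb : (b : ℕ) = 2 * j + 2) :
    majorana n a * majorana n b = I • pauliXX n j := by
  rw [majorana_eq_tensor, majorana_eq_tensor, tensor_mul, pauliXX]
  refine tensor_eq_smul_of_eq_smul j I ?_ fun i hi => ?_
  · rw [majoranaFactor_of_eq _ (by omega), majoranaFactor_of_lt _ (by omega),
      if_neg (by omega), if_pos (Or.inl rfl), σY_mul_σZ]
  · have hi' : (i : ℕ) ≠ j := fun h => hi (Fin.ext h)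
    rcases hi'.lt_or_gt with hlt | hgt
    · rw [if_neg (by omega), majoranaFactor_of_lt _ (by omega),
        majoranaFactor_of_lt _ (by omega), σZ_mul_self]
    rcases (Nat.succ_le_of_lt hgt).eq_or_lt with heq | hgt'
    · rw [if_pos (Or.inr heq.symm), majoranaFactor_of_gt _ (by omega),
        majoranaFactor_of_eq _ (by omega), if_pos (by omega), one_mul]
    · rw [if_neg (by omega), majoranaFactor_of_gt _ (by omega),
        majoranaFactor_of_gt _ (by omega), one_mul]

lemma exists_covBy_of_mem_matchgateGens {n : ℕ} {H : NMat n} (hH : H ∈ matchgateGens n) :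
    ∃ a b : Fin (2 * n), a ⋖ b ∧ H = (-I) • (majorana n a * majorana n b) := by
  have neg_I_smul_I_smul (M : NMat n) : M = (-I) • (I • M) := by
    rw [smul_smul, neg_mul, I_mul_I, neg_neg, one_smul]
  rcases hH with ⟨j, rfl⟩ | ⟨j, hj, rfl⟩
  · exact ⟨⟨2 * j, by omega⟩, ⟨2 * j + 1, by omega⟩, Fin.covBy_iff.mpr (Order.covBy_add_one _),
      by rw [majorana_mul_majorana_eq_smul_pauliZ j rfl rfl, ← neg_I_smul_I_smul]⟩
  · exact ⟨⟨2 * j + 1, by omega⟩, ⟨2 * j + 2, by omega⟩,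
      Fin.covBy_iff.mpr (Order.covBy_add_one _),
      by rw [majorana_mul_majorana_eq_smul_pauliXX j rfl rfl, ← neg_I_smul_I_smul]⟩

lemma bigH_smul {n : ℕ} (c : ℂ) (H : NMat n) : bigH n (c • H) = c • bigH n H := by
  rw [bigH, bigH, smul_kronecker, kronecker_smul, smul_add]

lemma lie_bigH_kronecker {n : ℕ} (H A B : NMat n) :
    ⁅bigH n H, A ⊗ₖ B⁆ = ⁅H, A⁆ ⊗ₖ B + A ⊗ₖ ⁅H, B⁆ := by
  simp only [bigH, Ring.lie_def, add_mul, mul_add, ← mul_kronecker_mul, one_mul, mul_one]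
  ext ⟨i, j⟩ ⟨k, l⟩
  simp only [Matrix.sub_apply, Matrix.add_apply, kroneckerMap_apply]
  ring

lemma piSum_map_swap {n : ℕ} {a b : Fin (2 * n)} (hab : a ⋖ b) {s : Finset (Fin (2 * n))}
    (ha : a ∈ s) (hb : b ∉ s) : piSum n (s.map (Equiv.swap a b).toEmbedding) = piSum n s + 1 := by
  have hba : (b : ℕ) = a + 1 := (Nat.covBy_iff_add_one_eq.mp (Fin.covBy_iff.mp hab)).symm
  have hfix : ∀ μ ∈ s.erase a, ((Equiv.swap a b μ : Fin (2 * n)) : ℕ) + 1 = μ + 1 :=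
    fun μ hμ => by rw [Equiv.swap_apply_of_ne_of_ne (Finset.ne_of_mem_erase hμ)
      fun h : μ = b => hb (h ▸ Finset.mem_of_mem_erase hμ)]
  rw [piSum, piSum, Finset.sum_map, ← Finset.add_sum_erase _ _ ha,
    ← Finset.add_sum_erase s _ ha]
  simp only [Equiv.coe_toEmbedding, Equiv.swap_apply_left, Finset.sum_congr rfl hfix]
  omega

lemma cProd_eq_sortedProd (n : ℕ) (s : Finset (Fin (2 * n))) :
    cProd n s = sortedProd (majorana n) s :=
  rfl

section

attribute [local instance] LieRing.ofAssociativeRing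

lemma lie_bigH_Q0 {n : ℕ} {a b : Fin (2 * n)} (hab : a ⋖ b) (κ : ℕ) :
    ⁅bigH n (majorana n a * majorana n b), Q0 n κ⁆ = 0 := by
  have hγ := isCliffordFamily_majorana n
  rw [Q0, lie_smul, lie_sum, Finset.sum_powersetCard_eq_zero_of_swap a b κ, smul_zero]
  · intro s h
    rw [lie_bigH_kronecker, cProd_eq_sortedProd, hγ.lie_pair_sortedProd_of_iff hab.ne h,
      zero_kronecker, kronecker_zero, add_zero]
  · intro s ha hb
    simp only [lie_bigH_kronecker, cProd_eq_sortedProd, hγ.lie_pair_sortedProd_of_mem hab ha hb,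
      hγ.lie_pair_sortedProd_map_swap hab ha hb]
    ext ⟨i, j⟩ ⟨k, l⟩
    simp only [two_nsmul, Matrix.add_apply, Matrix.neg_apply, kroneckerMap_apply,
      Matrix.zero_apply]
    ring

lemma lie_bigH_Q1 {n : ℕ} {a b : Fin (2 * n)} (hab : a ⋖ b) (κ : ℕ) :
    ⁅bigH n (majorana n a * majorana n b), Q1 n κ⁆ = 0 := by
  have hγ := isCliffordFamily_majorana n
  rw [Q1, lie_smul, lie_sum, Finset.sum_powersetCard_eq_zero_of_swap a b κ, smul_zero]
  · intro s h
    have hc : a ∈ sᶜ ↔ b ∈ sᶜ := by simpa only [Finset.mem_compl] using not_congr h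
    rw [lie_smul, lie_bigH_kronecker, cProd_eq_sortedProd, cProd_eq_sortedProd,
      hγ.lie_pair_sortedProd_of_iff hab.ne h, hγ.lie_pair_sortedProd_of_iff hab.ne hc,
      zero_kronecker, kronecker_zero, add_zero, smul_zero]
  · intro s ha hb
    -- `sᶜ` contains `b` but not `a`: it is the swap image of `t`, which contains `a` but not `b`.
    have hsc : sᶜ = (s.map (Equiv.swap a b).toEmbedding)ᶜ.map (Equiv.swap a b).toEmbedding := by
      rw [Finset.compl_map_equiv, Finset.map_swap_map_swap]
    set t := (s.map (Equiv.swap a b).toEmbedding)ᶜ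
    have hat : a ∈ t := Finset.mem_compl.mpr (Finset.mem_map_swap_left.not.mpr hb)
    have hbt : b ∉ t := Finset.notMem_compl.mpr (Finset.mem_map_swap_right.mpr ha)
    rw [hsc]
    simp only [lie_smul, lie_bigH_kronecker, cProd_eq_sortedProd,
      hγ.lie_pair_sortedProd_of_mem hab ha hb, hγ.lie_pair_sortedProd_map_swap hab ha hb,
      hγ.lie_pair_sortedProd_of_mem hab hat hbt, hγ.lie_pair_sortedProd_map_swap hab hat hbt,
      piSum_map_swap hab ha hb]
    ext ⟨i, j⟩ ⟨k, l⟩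
    simp only [two_nsmul, Matrix.add_apply, Matrix.neg_apply, Matrix.smul_apply, smul_eq_mul,
      kroneckerMap_apply, Matrix.zero_apply]
    ring

theorem Q_commutes_with_generators_general (n : ℕ) (κ : ℕ)
    (H : NMat n) (hH : H ∈ matchgateGens n) :
    bigH n H * Q0 n κ - Q0 n κ * bigH n H = 0
    ∧ bigH n H * Q1 n κ - Q1 n κ * bigH n H = 0 := by
  obtain ⟨a, b, hab, rfl⟩ := exists_covBy_of_mem_matchgateGens hH
  simp only [← Ring.lie_def, bigH_smul, smul_lie, lie_bigH_Q0 hab, lie_bigH_Q1 hab, smul_zero,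
    and_self]

/-- Each `Q_κ^a` commutes with `H ⊗ I + I ⊗ H` for every matchgate generator `H`. -/
theorem Q_commutes_with_generators (n : ℕ) (hn : 1 ≤ n) (κ : ℕ) (hκ : κ ≤ 2 * n)
    (H : NMat n) (hH : H ∈ matchgateGens n) :
    bigH n H * Q0 n κ - Q0 n κ * bigH n H = 0
    ∧ bigH n H * Q1 n κ - Q1 n κ * bigH n H = 0 :=
  Q_commutes_with_generators_general n κ H hH

end

end
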